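/- arXiv:2004.15009 — 5 statements merged into one kernel-verified Lean document; each statement's English description precedes it below -/
import Mathlib

section
/- Let |ψ⟩ = (1/√2)(|0⟩^{⊗n}|0⟩^{⊗n} + |Φ_2⟩^{⊗n}) ∈ (ℂ²)^{⊗n} ⊗ (ℂ²)^{⊗n}, where |Φ_2⟩ = (1/√2)(|00⟩+|11⟩) and the bipartition puts the first tensor factor of each Φ_2 on side A. Then the reduced density operator ψ_A = Tr_B |ψ⟩⟨ψ| has largest eigenvalue λ_1 = (1/2)(1 + 2^{-n/2})² and rank 2^n; hence its entanglement spread log(rank · λ_1) is at least n − 1. -/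
/-!
Both `|0⟩^{⊗n}|0⟩^{⊗n}` and `|Φ₂⟩^{⊗n}` are diagonal in the computational basis of `A` and `B`,
so the coefficient matrix `M` of `ψ` is itself diagonal: its entries `w x / √2`, with
`w 0 = 1 + 2^{-n/2}` and `w x = 2^{-n/2}` otherwise, are the Schmidt coefficients. Hence
`ψ_A = M Mᴴ` is diagonal with the strictly positive entries `w x ^ 2 / 2`, which gives the
largest eigenvalue, full rank `2^n`, and `2^n λ₁ ≥ 2^{n-1}`.
-/

open Matrix

section DiagonalSpectrum

variable {ι 𝕜 : Type*} [Fintype ι] [DecidableEq ι] [RCLike 𝕜]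

theorem Matrix.diagonal_mul_conjTranspose_diagonal (d : ι → 𝕜) :
    diagonal d * (diagonal d)ᴴ = diagonal fun i => ((‖d i‖ ^ 2 : ℝ) : 𝕜) := by
  rw [diagonal_conjTranspose, diagonal_mul_diagonal]
  congr 1
  funext i
  simp [RCLike.mul_conj]

theorem Matrix.IsHermitian.range_eigenvalues_of_eq_diagonal {A : Matrix ι ι 𝕜}
    (hA : A.IsHermitian) {e : ι → ℝ} (h : A = diagonal fun i => (e i : 𝕜)) :
    Set.range hA.eigenvalues = Set.range e := by
  ext r
  rw [← hA.spectrum_real_eq_range_eigenvalues, ← spectrum.algebraMap_mem_iff 𝕜, h,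
    spectrum_diagonal]
  simp [RCLike.algebraMap_eq_ofReal]

end DiagonalSpectrum

theorem sub_one_le_logb_two_pow_mul (n : ℕ) {t : ℝ} (ht : 1 / 2 ≤ t) :
    (n : ℝ) - 1 ≤ Real.logb 2 (2 ^ n * t) := by
  have h_half : Real.logb 2 (2 ^ n * (1 / 2)) = n - 1 := by
    rw [Real.logb_mul (by positivity) (by norm_num), Real.logb_pow, one_div, Real.logb_inv,
      Real.logb_self_eq_one one_lt_two]
    ring
  rw [← h_half]
  exact Real.logb_le_logb_of_le one_lt_two (by positivity) (by gcongr)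

namespace PsiState

variable {n : ℕ}

/-- Schmidt coefficients of `ψ`, up to the common factor `1/√2`. -/
noncomputable def schmidtWeight (s : ℝ) (x : Fin n → Bool) : ℝ :=
  if x = (fun _ => false) then 1 + s else s

theorem schmidtWeight_le (s : ℝ) (x : Fin n → Bool) :
    schmidtWeight s x ≤ 1 + s := by
  unfold schmidtWeight
  split_ifs <;> linarith

theorem schmidtWeight_pos {s : ℝ} (hs : 0 < s) (x : Fin n → Bool) :
    0 < schmidtWeight s x := by
  unfold schmidtWeight
  split_ifs <;> positivity

theorem isGreatest_range_schmidtWeight_sq_div_two {s : ℝ} (hs : 0 < s) :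
    IsGreatest (Set.range fun x : Fin n → Bool => schmidtWeight s x ^ 2 / 2)
      ((1 / 2) * (1 + s) ^ 2) := by
  refine ⟨⟨fun _ => false, by simp only [schmidtWeight, ↓reduceIte]; ring⟩, ?_⟩
  rintro _ ⟨x, rfl⟩
  have h_le := schmidtWeight_le s x
  have h_nonneg := (schmidtWeight_pos hs x).le
  nlinarith

noncomputable def coeffMatrix (n : ℕ) (s : ℝ) : Matrix (Fin n → Bool) (Fin n → Bool) ℂ :=
  Matrix.of fun x y =>
    (((Real.sqrt 2)⁻¹ : ℝ) : ℂ) *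
      ((if x = (fun _ => false) ∧ y = (fun _ => false) then 1 else 0)
        + (s : ℂ) * (if x = y then 1 else 0))

theorem coeffMatrix_eq_diagonal (s : ℝ) :
    coeffMatrix n s = diagonal fun x => (((Real.sqrt 2)⁻¹ * schmidtWeight s x : ℝ) : ℂ) := by
  ext x y
  by_cases hxy : x = y
  · subst hxy
    by_cases hx : x = fun _ => false <;> simp [coeffMatrix, schmidtWeight, hx, mul_add]
  · have : ¬(x = (fun _ => false) ∧ y = fun _ => false) := fun ⟨hx, hy⟩ => hxy (hx.trans hy.symm)
    simp [coeffMatrix, hxy, this]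

theorem coeffMatrix_mul_conjTranspose (s : ℝ) :
    coeffMatrix n s * (coeffMatrix n s)ᴴ =
      diagonal fun x => ((schmidtWeight s x ^ 2 / 2 : ℝ) : ℂ) := by
  rw [coeffMatrix_eq_diagonal, diagonal_mul_conjTranspose_diagonal]
  congr 1
  funext x
  rw [Complex.norm_real, Real.norm_eq_abs, sq_abs, mul_pow, inv_pow,
    Real.sq_sqrt zero_le_two, inv_mul_eq_div]
  rfl -- `RCLike.ofReal` on `ℂ` is `Complex.ofReal` only up to unfolding

end PsiState

/-- For `|ψ⟩ = (1/√2)(|0⟩^{⊗n}|0⟩^{⊗n} + |Φ₂⟩^{⊗n})`, whose coefficient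
matrix (A-side indexed by bit strings) is `M x y = (1/√2)(δ_{x,0}δ_{y,0} + 2^{-n/2}δ_{x,y})`,
the reduced state `ψ_A = M Mᴴ` has largest eigenvalue `(1/2)(1+2^{-n/2})²`, rank `2^n`,
and entanglement spread `log₂(2^n · λ₁) ≥ n − 1`. -/
theorem stmt_4 (n : ℕ) :
    let s : ℝ := ((Real.sqrt 2)⁻¹) ^ n   -- s = 2^{-n/2}
    let M : Matrix (Fin n → Bool) (Fin n → Bool) ℂ := Matrix.of fun x y =>
      (((Real.sqrt 2)⁻¹ : ℝ) : ℂ) *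
        ((if x = (fun _ => false) ∧ y = (fun _ => false) then 1 else 0)
          + (s : ℂ) * (if x = y then 1 else 0))
    (⨆ i, (Matrix.isHermitian_mul_conjTranspose_self M).eigenvalues i)
        = (1 / 2) * (1 + s) ^ 2 ∧
      (M * Mᴴ).rank = 2 ^ n ∧
      (n : ℝ) - 1 ≤ Real.logb 2 ((2 ^ n : ℝ) * ((1 / 2) * (1 + s) ^ 2)) := by
  intro s M
  have hs : 0 < s := by positivity
  have hMM : M * Mᴴ = _ := PsiState.coeffMatrix_mul_conjTranspose s
  refine ⟨?_, ?_, sub_one_le_logb_two_pow_mul n (by nlinarith)⟩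
  · rw [← sSup_range, (isHermitian_mul_conjTranspose_self M).range_eigenvalues_of_eq_diagonal
      (e := fun x => PsiState.schmidtWeight s x ^ 2 / 2) hMM,
      (PsiState.isGreatest_range_schmidtWeight_sq_div_two hs).csSup_eq]
  · rw [hMM, rank_diagonal]
    simp [(PsiState.schmidtWeight_pos hs _).ne']
end

section
/- (Expander-based approximate reflection) Let {U_1,...,U_d} be unitaries on ℂ^p satisfying ‖(1/d)∑_j U_j ⊗ U_j* − |Φ_p⟩⟨Φ_p|‖ ≤ ε in operator norm, where |Φ_p⟩ = (1/√p)∑_{j=1}^p |j⟩⊗|j⟩ and U* denotes entrywise complex conjugation. Define V = ∑_j |j⟩⟨j| ⊗ U_j on ℂ^d ⊗ ℂ^p, Ṽ = ∑_j |j⟩⟨j| ⊗ U_j*, and |s⟩ = (1/√d)∑_j |j⟩, where the control register ℂ^d of V and Ṽ is shared and the operator 2|s⟩⟨s|⊗I − I acts on the control register and as the identity elsewhere. Then for every unit vector |Ψ⟩ ∈ ℂ^p ⊗ ℂ^p, ‖ (V† ⊗ Ṽ†)(2|s⟩⟨s| ⊗ I − I)(V ⊗ Ṽ)(|s⟩⊗|Ψ⟩)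 − |s⟩ ⊗ (2|Φ_p⟩⟨Φ_p| − I)|Ψ⟩ ‖ ≤ 2ε. -/
open Matrix
set_option maxHeartbeats 2000000

/-- The Euclidean (ℓ²) norm of a finitely-supported complex vector. -/
noncomputable def vecEnorm {ι : Type*} [Fintype ι] (v : ι → ℂ) : ℝ :=
  Real.sqrt (∑ i, ‖v i‖ ^ 2)

section Aux

lemma aux_sumsq_eq (n : Type*) [Fintype n] (v : n → ℂ) :
    ((∑ i, ‖v i‖ ^ 2 : ℝ) : ℂ) = star v ⬝ᵥ v := by
  push_cast
  simp only [dotProduct, Pi.star_apply, Complex.star_def]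
  refine Finset.sum_congr rfl fun i _ => ?_
  norm_cast; rw [Complex.sq_norm, mul_comm, Complex.mul_conj]

lemma aux_isometry_sumsq {n : Type*} [Fintype n] [DecidableEq n]
    (C : Matrix n n ℂ) (h : Cᴴ * C = 1) (v : n → ℂ) :
    ∑ i, ‖(C.mulVec v) i‖ ^ 2 = ∑ i, ‖v i‖ ^ 2 := by
  have key : ((∑ i, ‖(C.mulVec v) i‖ ^ 2 : ℝ) : ℂ)
      = ((∑ i, ‖v i‖ ^ 2 : ℝ) : ℂ) := by
    rw [aux_sumsq_eq, aux_sumsq_eq]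
    rw [Matrix.star_mulVec, dotProduct_mulVec, Matrix.vecMul_vecMul, h,
      Matrix.vecMul_one]
  exact_mod_cast key

/-- generic linear-combination pull-out for `mulVec`. -/
lemma aux_comb {n ι : Type*} [Fintype n] [Fintype ι] (B : Matrix n n ℂ)
    (a : ℂ) (v : ι → n → ℂ) (w : n → ℂ) (y : n) :
    (B.mulVec (fun z => a * ∑ j, v j z - w z)) y
      = a * ∑ j, (B.mulVec (v j)) y - (B.mulVec w) y := by
  have h1 : ∀ z, B y z * (a * ∑ j, v j z - w z)
      = (∑ j, a * (B y z * v j z)) - (B y z * w z) := by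
    intro z
    rw [mul_sub, Finset.mul_sum, Finset.mul_sum]
    congr 1
    · exact Finset.sum_congr rfl fun j _ => by ring
  simp only [Matrix.mulVec, dotProduct]
  rw [Finset.sum_congr rfl fun z _ => h1 z, Finset.sum_sub_distrib, Finset.sum_comm]
  congr 1
  · rw [Finset.mul_sum]
    exact Finset.sum_congr rfl fun j _ => by rw [Finset.mul_sum]

variable {d p : ℕ}

noncomputable def Amat (U : Fin d → Matrix (Fin p) (Fin p) ℂ) (j : Fin d) :
    Matrix (Fin p × Fin p) (Fin p × Fin p) ℂ :=
  Matrix.of fun x y => U j x.1 y.1 * (starRingEnd ℂ) (U j x.2 y.2)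

noncomputable def phiV (p : ℕ) : Fin p × Fin p → ℂ :=
  fun z => if z.1 = z.2 then (((Real.sqrt p)⁻¹ : ℝ) : ℂ) else 0

lemma phiV_def (p : ℕ) (z : Fin p × Fin p) :
    (if z.1 = z.2 then (((Real.sqrt p)⁻¹ : ℝ) : ℂ) else 0) = phiV p z := rfl

variable (U : Fin d → Matrix (Fin p) (Fin p) ℂ)
  (hU : ∀ j, U j * (U j)ᴴ = 1 ∧ (U j)ᴴ * U j = 1)

include hU

lemma hsum1 (j : Fin d) (a b : Fin p) :
    ∑ z, (starRingEnd ℂ) (U j z a) * U j z b = if a = b then 1 else 0 := by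
  have := congrFun (congrFun (hU j).2 a) b
  simpa [Matrix.mul_apply, Matrix.conjTranspose_apply, Matrix.one_apply] using this

lemma hsum2 (j : Fin d) (a b : Fin p) :
    ∑ z, U j a z * (starRingEnd ℂ) (U j b z) = if a = b then 1 else 0 := by
  have := congrFun (congrFun (hU j).1 a) b
  simpa [Matrix.mul_apply, Matrix.conjTranspose_apply, Matrix.one_apply] using this

lemma hsum3 (j : Fin d) (a b : Fin p) :
    ∑ z, U j z a * (starRingEnd ℂ) (U j z b) = if a = b then 1 else 0 := by
  calc ∑ z, U j z a * (starRingEnd ℂ) (U j z b)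
      = (starRingEnd ℂ) (∑ z, (starRingEnd ℂ) (U j z a) * U j z b) := by
        simp [map_sum, mul_comm]
    _ = _ := by rw [hsum1 U hU j a b]; split <;> simp

lemma Amat_u1 (j : Fin d) : (Amat U j)ᴴ * Amat U j = 1 := by
  ext x y
  simp only [Matrix.mul_apply, Matrix.conjTranspose_apply, Amat, Matrix.of_apply,
    Fintype.sum_prod_type, Complex.star_def, _root_.map_mul, RingHomCompTriple.comp_apply, Complex.conj_conj, RingHom.id_apply]
  have : ∀ z1 : Fin p, ∑ z2 : Fin p,
      (starRingEnd ℂ) (U j z1 x.1) * U j z2 x.2 * (U j z1 y.1 * (starRingEnd ℂ) (U j z2 y.2))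
      = ((starRingEnd ℂ) (U j z1 x.1) * U j z1 y.1) *
        ∑ z2, U j z2 x.2 * (starRingEnd ℂ) (U j z2 y.2) := by
    intro z1; rw [Finset.mul_sum]; refine Finset.sum_congr rfl fun z2 _ => by ring
  rw [Finset.sum_congr rfl fun z1 _ => this z1, ← Finset.sum_mul, hsum1 U hU, hsum3 U hU,
    Matrix.one_apply]
  by_cases h1 : x.1 = y.1 <;> by_cases h2 : x.2 = y.2 <;>
    simp [h1, h2, Prod.ext_iff]

lemma Amat_u2 (j : Fin d) : Amat U j * (Amat U j)ᴴ = 1 := by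
  ext x y
  simp only [Matrix.mul_apply, Matrix.conjTranspose_apply, Amat, Matrix.of_apply,
    Fintype.sum_prod_type, Complex.star_def, _root_.map_mul, RingHomCompTriple.comp_apply, Complex.conj_conj, RingHom.id_apply]
  have : ∀ z1 : Fin p, ∑ z2 : Fin p,
      U j x.1 z1 * (starRingEnd ℂ) (U j x.2 z2) * ((starRingEnd ℂ) (U j y.1 z1) * U j y.2 z2)
      = (U j x.1 z1 * (starRingEnd ℂ) (U j y.1 z1)) *
        ∑ z2, (starRingEnd ℂ) (U j x.2 z2) * U j y.2 z2 := by
    intro z1; rw [Finset.mul_sum]; refine Finset.sum_congr rfl fun z2 _ => by ring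
  have hs2 : ∑ z2, (starRingEnd ℂ) (U j x.2 z2) * U j y.2 z2 = if x.2 = y.2 then 1 else 0 := by
    calc ∑ z2, (starRingEnd ℂ) (U j x.2 z2) * U j y.2 z2
        = (starRingEnd ℂ) (∑ z2, U j x.2 z2 * (starRingEnd ℂ) (U j y.2 z2)) := by
          simp [map_sum, mul_comm]
      _ = _ := by rw [hsum2 U hU j x.2 y.2]; split <;> simp
  rw [Finset.sum_congr rfl fun z1 _ => this z1, ← Finset.sum_mul, hsum2 U hU, hs2,
    Matrix.one_apply]
  by_cases h1 : x.1 = y.1 <;> by_cases h2 : x.2 = y.2 <;>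
    simp [h1, h2, Prod.ext_iff]

lemma Amat_phi (j : Fin d) : (Amat U j).mulVec (phiV p) = phiV p := by
  funext x
  have h : (Amat U j).mulVec (phiV p) x
      = (∑ z1, U j x.1 z1 * (starRingEnd ℂ) (U j x.2 z1)) * (((Real.sqrt p)⁻¹ : ℝ) : ℂ) := by
    simp only [Matrix.mulVec, dotProduct, Amat, Matrix.of_apply, phiV,
      Fintype.sum_prod_type, mul_ite, mul_zero, Finset.sum_ite_eq, Finset.mem_univ, if_true,
      Finset.sum_mul]
  rw [h, hsum2 U hU, phiV]
  split <;> simp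

lemma Amat_ct_phi (j : Fin d) : (Amat U j)ᴴ.mulVec (phiV p) = phiV p := by
  conv_lhs => rw [← Amat_phi U hU j]
  rw [Matrix.mulVec_mulVec, Amat_u1 U hU, Matrix.one_mulVec]

end Aux

/-- Expander-based approximate reflection: given a `(p,d,ε)` quantum
expander `{U_j}` (i.e. `‖(1/d)∑_j U_j ⊗ U_j* − |Φ_p⟩⟨Φ_p|‖ ≤ ε`), the five-step
protocol `W† R W` (with `W = V ⊗ Ṽ` on the shared control register and
`R = 2|s⟩⟨s|⊗I − I`) applied to `|s⟩ ⊗ |Ψ⟩` is `2ε`-close to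
`|s⟩ ⊗ (2|Φ_p⟩⟨Φ_p| − I)|Ψ⟩` for every unit vector `Ψ`. -/
theorem stmt_6 {d p : ℕ} (hd : 0 < d) (hp : 0 < p) (ε : ℝ) (hε : 0 ≤ ε)
    (U : Fin d → Matrix (Fin p) (Fin p) ℂ)
    (hU : ∀ j, U j * (U j)ᴴ = 1 ∧ (U j)ᴴ * U j = 1)
    (hexp : ∀ v : Fin p × Fin p → ℂ,
      vecEnorm ((Matrix.of (fun x y : Fin p × Fin p =>
          (1 / (d : ℂ)) * ∑ j, U j x.1 y.1 * (starRingEnd ℂ) (U j x.2 y.2)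
            - (if x.1 = x.2 then (((Real.sqrt p)⁻¹ : ℝ) : ℂ) else 0)
              * (starRingEnd ℂ)
                  (if y.1 = y.2 then (((Real.sqrt p)⁻¹ : ℝ) : ℂ) else 0))).mulVec v)
        ≤ ε * vecEnorm v)
    (Ψ : Fin p × Fin p → ℂ) (hΨ : vecEnorm Ψ = 1) :
    -- W = V ⊗ Ṽ with shared control register; R = 2|s⟩⟨s|⊗I − I
    let W : Matrix (Fin d × Fin p × Fin p) (Fin d × Fin p × Fin p) ℂ :=
      Matrix.of fun x y =>
        if x.1 = y.1 then U x.1 x.2.1 y.2.1 * (starRingEnd ℂ) (U x.1 x.2.2 y.2.2) else 0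
    let R : Matrix (Fin d × Fin p × Fin p) (Fin d × Fin p × Fin p) ℂ :=
      Matrix.of fun x y =>
        (2 / (d : ℂ)) * (if x.2 = y.2 then 1 else 0) - (if x = y then 1 else 0)
    -- input |s⟩ ⊗ |Ψ⟩ and target |s⟩ ⊗ (2Φ_p Φ_p† − I)Ψ
    vecEnorm (fun x : Fin d × Fin p × Fin p =>
        (Wᴴ * R * W).mulVec (fun y => (((Real.sqrt d)⁻¹ : ℝ) : ℂ) * Ψ y.2) x
          - (((Real.sqrt d)⁻¹ : ℝ) : ℂ) *
              (2 * (if x.2.1 = x.2.2 then (((Real.sqrt p)⁻¹ : ℝ) : ℂ) else 0) *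
                  (∑ z : Fin p × Fin p,
                    (starRingEnd ℂ)
                        (if z.1 = z.2 then (((Real.sqrt p)⁻¹ : ℝ) : ℂ) else 0) * Ψ z)
                - Ψ x.2))
      ≤ 2 * ε := by
  intro W R
  simp only [phiV_def]
  set c : ℂ := (((Real.sqrt d)⁻¹ : ℝ) : ℂ) with hc
  set Emat : Matrix (Fin p × Fin p) (Fin p × Fin p) ℂ :=
    Matrix.of (fun x y : Fin p × Fin p =>
      (1 / (d : ℂ)) * ∑ j, U j x.1 y.1 * (starRingEnd ℂ) (U j x.2 y.2)
        - (if x.1 = x.2 then (((Real.sqrt p)⁻¹ : ℝ) : ℂ) else 0)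
          * (starRingEnd ℂ)
              (if y.1 = y.2 then (((Real.sqrt p)⁻¹ : ℝ) : ℂ) else 0)) with hEmat
  set eV : Fin p × Fin p → ℂ := Emat.mulVec Ψ with heV
  set cΨ : ℂ := ∑ z : Fin p × Fin p, (starRingEnd ℂ) (phiV p z) * Ψ z with hcΨ
  -- step lemmas
  have hWmul : ∀ g : Fin d × Fin p × Fin p → ℂ,
      W.mulVec g = fun x => ((Amat U x.1).mulVec (fun z => g (x.1, z))) x.2 := by
    intro g; funext x
    simp only [W, Matrix.mulVec, dotProduct, Matrix.of_apply, Amat,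
      Fintype.sum_prod_type, ite_mul, zero_mul, Finset.sum_ite_irrel, Finset.sum_const_zero,
      Finset.sum_ite_eq, Finset.mem_univ, if_true]
  have hWctmul : ∀ g : Fin d × Fin p × Fin p → ℂ,
      Wᴴ.mulVec g = fun x => ((Amat U x.1)ᴴ.mulVec (fun z => g (x.1, z))) x.2 := by
    intro g; funext x
    simp only [W, Matrix.mulVec, dotProduct, Matrix.conjTranspose_apply,
      Matrix.of_apply, Amat, Fintype.sum_prod_type, Complex.star_def]
    have : ∀ (j : Fin d) (z1 z2 : Fin p),
        (starRingEnd ℂ) (if j = x.1 then U j z1 x.2.1 * (starRingEnd ℂ) (U j z2 x.2.2) else 0)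
          * g (j, z1, z2)
        = if j = x.1 then
            (starRingEnd ℂ) (U j z1 x.2.1 * (starRingEnd ℂ) (U j z2 x.2.2)) * g (j, z1, z2)
          else 0 := by
      intro j z1 z2; split <;> simp
    simp only [this, Finset.sum_ite_irrel, Finset.sum_const_zero, Finset.sum_ite_eq',
      Finset.mem_univ, if_true]
  have hRmul : ∀ g : Fin d × Fin p × Fin p → ℂ,
      R.mulVec g = fun x => (2 / (d : ℂ)) * ∑ j, g (j, x.2) - g x := by
    intro g; funext x
    simp only [R, Matrix.mulVec, dotProduct, Matrix.of_apply, sub_mul,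
      Finset.sum_sub_distrib, ite_mul, one_mul, zero_mul, mul_ite, mul_zero, mul_one,
      Fintype.sum_prod_type, Finset.sum_ite_eq, Finset.sum_ite_eq', Finset.mem_univ, if_true]
    rw [Finset.mul_sum]
  -- auxiliary linearity facts
  have hsmulVec : ∀ (M : Matrix (Fin p × Fin p) (Fin p × Fin p) ℂ) (a : ℂ)
      (v : Fin p × Fin p → ℂ),
      M.mulVec (fun z => a * v z) = fun z => a * M.mulVec v z := by
    intro M a v; funext z
    simp only [Matrix.mulVec, dotProduct, Finset.mul_sum]
    exact Finset.sum_congr rfl fun w _ => by ring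
  have hBB : ∀ (j : Fin d) (u : Fin p × Fin p → ℂ),
      (Amat U j)ᴴ.mulVec ((Amat U j).mulVec u) = u := by
    intro j u
    rw [Matrix.mulVec_mulVec, Amat_u1 U hU, Matrix.one_mulVec]
  have hEvec : eV = fun z => (1 / (d : ℂ)) * ∑ k, ((Amat U k).mulVec Ψ) z
      - cΨ * phiV p z := by
    funext z
    rw [heV, hEmat]
    simp only [Matrix.mulVec, dotProduct, Matrix.of_apply, sub_mul,
      Finset.sum_sub_distrib]
    congr 1
    · have h1 : ∀ w : Fin p × Fin p,
          ((1 / (d : ℂ)) * ∑ j, U j z.1 w.1 * (starRingEnd ℂ) (U j z.2 w.2)) * Ψ w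
            = ∑ j, (1 / (d : ℂ)) * (U j z.1 w.1 * (starRingEnd ℂ) (U j z.2 w.2) * Ψ w) := by
        intro w; rw [Finset.mul_sum, Finset.sum_mul]
        exact Finset.sum_congr rfl fun j _ => by ring
      rw [Finset.sum_congr rfl fun w _ => h1 w, Finset.sum_comm, Finset.mul_sum]
      refine Finset.sum_congr rfl fun k _ => ?_
      rw [Finset.mul_sum]
      rfl
    · have h2 : ∀ w : Fin p × Fin p,
          (phiV p z * (starRingEnd ℂ) (phiV p w)) * Ψ w
            = phiV p z * ((starRingEnd ℂ) (phiV p w) * Ψ w) := fun w => by ring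
      calc ∑ w : Fin p × Fin p, (phiV p z * (starRingEnd ℂ) (phiV p w)) * Ψ w
          = phiV p z * ∑ w : Fin p × Fin p, (starRingEnd ℂ) (phiV p w) * Ψ w := by
            rw [Finset.sum_congr rfl fun w _ => h2 w, ← Finset.mul_sum]
        _ = cΨ * phiV p z := by rw [hcΨ]; ring
  -- the main pointwise identity
  have hmain : (fun x : Fin d × Fin p × Fin p =>
        (Wᴴ * R * W).mulVec (fun y => c * Ψ y.2) x
          - c * (2 * phiV p x.2 * cΨ - Ψ x.2))
      = fun x => (2 * c) * (((Amat U x.1)ᴴ).mulVec eV) x.2 := by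
    funext x
    have e1 : (Wᴴ * R * W).mulVec (fun y => c * Ψ y.2)
        = Wᴴ.mulVec (R.mulVec (W.mulVec (fun y => c * Ψ y.2))) := by
      rw [Matrix.mulVec_mulVec, Matrix.mulVec_mulVec]
    rw [e1, hWmul, hRmul, hWctmul]
    show ((Amat U x.1)ᴴ.mulVec (fun z => (2 / (d : ℂ)) *
          ∑ j, ((Amat U j).mulVec (fun z' => c * Ψ z')) z
            - ((Amat U x.1).mulVec (fun z' => c * Ψ z')) z)) x.2
        - c * (2 * phiV p x.2 * cΨ - Ψ x.2)
      = (2 * c) * (((Amat U x.1)ᴴ).mulVec eV) x.2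
    rw [hEvec]
    simp only [hsmulVec]
    rw [aux_comb, aux_comb]
    simp only [hsmulVec, hBB, Amat_ct_phi U hU]
    simp only [← Finset.mul_sum]
    ring
  rw [hmain]
  -- norm computation
  have hT0 : (0:ℝ) ≤ ∑ y : Fin p × Fin p, ‖eV y‖ ^ 2 := by positivity
  have hiso : ∀ j : Fin d,
      ∑ y : Fin p × Fin p, ‖((Amat U j)ᴴ.mulVec eV) y‖ ^ 2
        = ∑ y : Fin p × Fin p, ‖eV y‖ ^ 2 := by
    intro j
    exact aux_isometry_sumsq _
      (by rw [Matrix.conjTranspose_conjTranspose]; exact Amat_u2 U hU j) eV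
  have hr2 : ((Real.sqrt d)⁻¹ : ℝ) ^ 2 * d = 1 := by
    rw [inv_pow, Real.sq_sqrt (Nat.cast_nonneg d)]
    field_simp
  have hsum : ∑ x : Fin d × Fin p × Fin p,
      ‖(2 * c) * (((Amat U x.1)ᴴ).mulVec eV) x.2‖ ^ 2
        = 4 * ∑ y : Fin p × Fin p, ‖eV y‖ ^ 2 := by
    have hstep : ∀ x : Fin d × Fin p × Fin p,
        ‖(2 * c) * (((Amat U x.1)ᴴ).mulVec eV) x.2‖ ^ 2
          = (4 * ((Real.sqrt d)⁻¹ : ℝ) ^ 2) *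
              ‖(((Amat U x.1)ᴴ).mulVec eV) x.2‖ ^ 2 := by
      intro x
      rw [norm_mul, norm_mul, Complex.norm_two, hc, Complex.norm_real,
        Real.norm_of_nonneg (by positivity : (0:ℝ) ≤ (Real.sqrt d)⁻¹)]
      ring
    calc ∑ x : Fin d × Fin p × Fin p,
        ‖(2 * c) * (((Amat U x.1)ᴴ).mulVec eV) x.2‖ ^ 2
        = ∑ x : Fin d × Fin p × Fin p, (4 * ((Real.sqrt d)⁻¹ : ℝ) ^ 2) *
            ‖(((Amat U x.1)ᴴ).mulVec eV) x.2‖ ^ 2 :=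
          Finset.sum_congr rfl fun x _ => hstep x
      _ = ∑ j : Fin d, ∑ y : Fin p × Fin p, (4 * ((Real.sqrt d)⁻¹ : ℝ) ^ 2) *
            ‖(((Amat U j)ᴴ).mulVec eV) y‖ ^ 2 := Fintype.sum_prod_type _
      _ = ∑ j : Fin d, (4 * ((Real.sqrt d)⁻¹ : ℝ) ^ 2) *
            ∑ y : Fin p × Fin p, ‖eV y‖ ^ 2 :=
          Finset.sum_congr rfl fun j _ => by rw [← Finset.mul_sum, hiso j]
      _ = 4 * ∑ y : Fin p × Fin p, ‖eV y‖ ^ 2 := by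
          rw [Finset.sum_const, Finset.card_univ, Fintype.card_fin, nsmul_eq_mul]
          nlinarith [hr2]
  have heV_bound : vecEnorm eV ≤ ε := by
    have := hexp Ψ
    rwa [hΨ, mul_one] at this
  rw [vecEnorm, hsum]
  have h4 : Real.sqrt (4 * ∑ y : Fin p × Fin p, ‖eV y‖ ^ 2)
      = 2 * Real.sqrt (∑ y : Fin p × Fin p, ‖eV y‖ ^ 2) := by
    rw [show (4:ℝ) = 2^2 by norm_num, Real.sqrt_mul (by positivity),
      Real.sqrt_sq (by norm_num)]
  rw [h4]
  have : Real.sqrt (∑ y : Fin p × Fin p, ‖eV y‖ ^ 2) = vecEnorm eV := rfl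
  rw [this]
  linarith
end

section
/- (AGSP implies entanglement spread bound; Theorem 'Bounding entanglement spread using AGSP', heavy part) Let |Ω⟩ ∈ ℂ^{d_A}⊗ℂ^{d_B} be a unit vector with Schmidt coefficients λ_1 ≥ λ_2 ≥ ... in descending order. Fix ε ∈ (0,1), let b be the smallest integer with ε' := ∑_{i<b} λ_i ≥ ε (assume such b exists and b ≥ 2), and let |Ω_heavy⟩ = ∑_{i<b} √(λ_i/ε') |i⟩_A|i⟩_B in the Schmidt basis. Suppose K is an operator on ℂ^{p}⊗ℂ^{p}⊗ℂ^{d_A}⊗ℂ^{d_B} such that ‖K(|Φ_p⟩⊗|v⟩) − |Φ_p⟩⊗|Ω⟩⟨Ω|v⟩‖ ≤ Δ for all unit vectors |v⟩, and that K maps any vector of Schmidt rank s (across the A:B cut including the Φ_p registers) to a vector of Schmidt rank at most D·s. If Δ < √ε'/4, then ∑_{i=1}^{(b-1)D} λ_i ≥ (1 − 2Δ/√ε')². -/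
/-!
Feed `K` the normalised heavy part `Ω_heavy` of `Ω`. The vector `Φ_p ⊗ Ω_heavy` has Schmidt rank
`p (b - 1)`, so `K (Φ_p ⊗ Ω_heavy)` has Schmidt rank at most `p (b - 1) D`, and it is `Δ`-close
to `√ε' Φ_p ⊗ Ω` because `⟨Ω|Ω_heavy⟩ = √ε'`. Reshaped across the cut, `√ε' Φ_p ⊗ Ω` is the
diagonal matrix `√(ε'/p) (1_p ⊗ diag √λ)`, and by the Young–Eckart theorem every matrix of rank at
most `p m` is at Frobenius distance at least `√ε'` times the square root of the tail
`∑_{i ≥ m} λ_i` from it. With `m = (b - 1) D` this gives `ε' (1 - ∑_{i < m} λ_i) ≤ Δ²`, which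
rearranges to the claim once `Δ < √ε'/4`.
-/

open Matrix

/-- The Euclidean (ℓ²) norm of a finitely-supported complex vector. -/
noncomputable def enorm2 {ι : Type*} [Fintype ι] (v : ι → ℂ) : ℝ :=
  Real.sqrt (∑ i, ‖v i‖ ^ 2)

open Module Finset
open scoped InnerProductSpace

theorem sum_norm_sq_starProjection_orthonormalBasis {𝕜 E ι : Type*} [RCLike 𝕜] [Fintype ι]
    [NormedAddCommGroup E] [InnerProductSpace 𝕜 E] [FiniteDimensional 𝕜 E]
    (V : Submodule 𝕜 E) (e : OrthonormalBasis ι 𝕜 E) :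
    ∑ i, ‖V.starProjection (e i)‖ ^ 2 = finrank 𝕜 V := by
  have hproj : LinearMap.IsProj V (V.starProjection : E →ₗ[𝕜] E) :=
    ⟨fun x => V.starProjection_apply_mem x, fun _ hx => V.starProjection_eq_self_iff.2 hx⟩
  have htrace :=
    congrArg RCLike.re (LinearMap.trace_eq_sum_inner (V.starProjection : E →ₗ[𝕜] E) e)
  rw [hproj.trace, RCLike.natCast_re, map_sum] at htrace
  rw [htrace]
  refine Finset.sum_congr rfl fun i _ => ?_
  rw [← inner_conj_symm, RCLike.conj_re]
  exact (V.re_inner_starProjection_eq_normSq (e i)).symm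

theorem norm_sq_sub_norm_sq_starProjection_le {𝕜 E : Type*} [RCLike 𝕜]
    [NormedAddCommGroup E] [InnerProductSpace 𝕜 E]
    (V : Submodule 𝕜 E) [V.HasOrthogonalProjection] {x : E} (hx : x ∈ V) (y : E) :
    ‖y‖ ^ 2 - ‖V.starProjection y‖ ^ 2 ≤ ‖x - y‖ ^ 2 := by
  have hmin : ‖y - V.starProjection y‖ ≤ ‖y - x‖ := by
    rw [V.starProjection_minimal]
    exact ciInf_le ⟨0, Set.forall_mem_range.2 fun _ => norm_nonneg _⟩ (⟨x, hx⟩ : V)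
  rw [V.norm_sq_eq_add_norm_sq_starProjection y, V.starProjection_orthogonal', norm_sub_rev x]
  simpa using pow_le_pow_left₀ (norm_nonneg _) hmin 2

/-- The weights are `c j = ‖P e_j‖²` for `P` the projection onto the column space of `X`, so
`∑ c = tr P = rank X`; together with the bathtub principle this is the Young–Eckart bound. -/
theorem exists_weights_sum_eq_rank_le_frobenius {ι : Type*} [Fintype ι] [DecidableEq ι]
    (X : Matrix ι ι ℂ) (μ : ι → ℝ) :
    ∃ c : ι → ℝ, (∀ j, 0 ≤ c j) ∧ (∀ j, c j ≤ 1) ∧ ∑ j, c j = X.rank ∧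
      ∑ j, μ j ^ 2 * (1 - c j) ≤ ∑ i, ∑ j, ‖(X - diagonal fun j => (μ j : ℂ)) i j‖ ^ 2 := by
  let V : Submodule ℂ (EuclideanSpace ℂ ι) :=
    (Submodule.span ℂ (Set.range Xᵀ)).map
      ((WithLp.linearEquiv 2 ℂ (ι → ℂ)).symm : (ι → ℂ) →ₗ[ℂ] EuclideanSpace ℂ ι)
  have hV : finrank ℂ V = X.rank := by
    rw [rank_eq_finrank_span_cols]
    exact LinearEquiv.finrank_map_eq _ _
  let c : ι → ℝ := fun j => ‖V.starProjection (EuclideanSpace.single j 1)‖ ^ 2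
  refine ⟨c, fun j => by positivity, fun j => ?_, ?_, ?_⟩
  · have h := V.norm_starProjection_apply_le (EuclideanSpace.single j (1 : ℂ))
    rw [PiLp.norm_single, norm_one] at h
    exact pow_le_one₀ (norm_nonneg _) h
  · rw [← hV, ← sum_norm_sq_starProjection_orthonormalBasis V (EuclideanSpace.basisFun ι ℂ)]
    simp [c]
  rw [Finset.sum_comm]
  refine Finset.sum_le_sum fun j _ => ?_
  have hcol : WithLp.toLp 2 (Xᵀ j) ∈ V :=
    Submodule.mem_map_of_mem (Submodule.subset_span ⟨j, rfl⟩)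
  have key := norm_sq_sub_norm_sq_starProjection_le V hcol (EuclideanSpace.single j (μ j : ℂ))
  have hsingle : EuclideanSpace.single j (μ j : ℂ) = (μ j : ℂ) • EuclideanSpace.single j 1 := by
    ext i; by_cases h : i = j <;> simp [h]
  rw [hsingle, map_smul, norm_smul, norm_smul, PiLp.norm_single, EuclideanSpace.norm_sq_eq] at key
  refine le_of_eq_of_le ?_ (key.trans_eq (Finset.sum_congr rfl fun i _ => ?_))
  · simp only [c, Complex.norm_real, Real.norm_eq_abs, norm_one, mul_one, mul_pow, sq_abs]
    ring
  · by_cases h : i = j <;> simp [h]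

theorem sum_mul_le_mul_sum_filter_lt {d m : ℕ} {lam s : Fin d → ℝ} {q : ℝ}
    (hanti : Antitone lam) (hnn : ∀ i, 0 ≤ lam i) (hs0 : ∀ i, 0 ≤ s i) (hsq : ∀ i, s i ≤ q)
    (hsum : ∑ i, s i ≤ q * m) :
    ∑ i, lam i * s i ≤ q * ∑ i ∈ univ.filter (fun i : Fin d => (i : ℕ) < m), lam i := by
  rcases le_or_gt d m with hdm | hmd
  · rw [Finset.filter_true_of_mem fun i _ => i.isLt.trans_le hdm, Finset.mul_sum]
    exact Finset.sum_le_sum fun i _ => by nlinarith [hnn i, hsq i]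
  -- every weight is compared with the threshold value `lam m`
  set k : Fin d := ⟨m, hmd⟩
  have hpt : ∀ i, lam i * s i - q * (if (i : ℕ) < m then lam i else 0)
      ≤ lam k * (s i - if (i : ℕ) < m then q else 0) := by
    intro i
    split_ifs with hi
    · have : lam k ≤ lam i := hanti (Fin.mk_le_of_le_val hi.le)
      nlinarith [hsq i]
    · have : lam i ≤ lam k := hanti (Fin.le_def.2 (not_lt.1 hi))
      nlinarith [hs0 i]
  have htot := Finset.sum_le_sum fun i (_ : i ∈ univ) => hpt i
  rw [sum_sub_distrib, ← mul_sum, ← mul_sum, sum_sub_distrib, ← sum_filter, ← sum_filter,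
    sum_const, Fin.card_filter_val_lt, min_eq_right hmd.le, nsmul_eq_mul] at htot
  nlinarith [hnn k]

theorem card_mul_sq_mul_tail_le_frobenius {α : Type*} [Fintype α] [DecidableEq α] {d m : ℕ}
    {lam : Fin d → ℝ} (hanti : Antitone lam) (hnn : ∀ i, 0 ≤ lam i) (t : ℝ)
    (X : Matrix (α × Fin d) (α × Fin d) ℂ) (hX : X.rank ≤ Fintype.card α * m) :
    Fintype.card α * t ^ 2 *
        (∑ i, lam i - ∑ i ∈ univ.filter (fun i : Fin d => (i : ℕ) < m), lam i)
      ≤ ∑ i, ∑ j, ‖(X - diagonal fun q : α × Fin d => ((t * √(lam q.2) : ℝ) : ℂ)) i j‖ ^ 2 := by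
  obtain ⟨c, hc0, hc1, hcsum, hEY⟩ :=
    exists_weights_sum_eq_rank_le_frobenius X fun q => t * √(lam q.2)
  set s : Fin d → ℝ := fun i => ∑ a, c (a, i)
  have hbath : ∑ i, lam i * s i
      ≤ Fintype.card α * ∑ i ∈ univ.filter (fun i : Fin d => (i : ℕ) < m), lam i := by
    refine sum_mul_le_mul_sum_filter_lt hanti hnn (fun i => sum_nonneg fun a _ => hc0 _)
      (fun i => ?_) ?_
    · simpa using Finset.sum_le_card_nsmul univ (fun a => c (a, i)) 1 fun a _ => hc1 _
    · rw [Finset.sum_comm, ← Fintype.sum_prod_type, hcsum]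
      exact_mod_cast hX
  have hsplit : ∑ q : α × Fin d, (t * √(lam q.2)) ^ 2 * (1 - c q)
      = t ^ 2 * (Fintype.card α * ∑ i, lam i - ∑ i, lam i * s i) := by
    rw [Fintype.sum_prod_type, Finset.sum_comm, mul_sub, mul_sum, mul_sum, mul_sum,
      ← sum_sub_distrib]
    refine sum_congr rfl fun i _ => ?_
    simp only [s, mul_pow, Real.sq_sqrt (hnn i), mul_sub, mul_one, sum_sub_distrib, sum_const,
      card_univ, nsmul_eq_mul, mul_sum, mul_assoc]
    ring
  nlinarith [sq_nonneg t]

-- `Φ_p ⊗ v`, indexed as `((Φ_A, A), (Φ_B, B))` so that reshaping along the outer pair is the cut.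
noncomputable def phiTensor (p : ℕ) {d : ℕ} (v : Fin d × Fin d → ℂ) :
    (Fin p × Fin d) × (Fin p × Fin d) → ℂ :=
  fun y => (if y.1.1 = y.2.1 then (((Real.sqrt p)⁻¹ : ℝ) : ℂ) else 0) * v (y.1.2, y.2.2)

noncomputable def heavyState {d : ℕ} (lam : Fin d → ℝ) (S : Finset (Fin d)) :
    Fin d × Fin d → ℂ :=
  fun q => if q.1 = q.2 ∧ q.1 ∈ S then ((√(lam q.1 / ∑ i ∈ S, lam i) : ℝ) : ℂ) else 0

noncomputable def schmidtState {d : ℕ} (lam : Fin d → ℝ) : Fin d × Fin d → ℂ :=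
  fun q => if q.1 = q.2 then ((√(lam q.1) : ℝ) : ℂ) else 0

section

variable {d : ℕ} {lam : Fin d → ℝ}

theorem enorm2_heavyState (hnn : ∀ i, 0 ≤ lam i) {S : Finset (Fin d)}
    (hS : 0 < ∑ i ∈ S, lam i) : enorm2 (heavyState lam S) = 1 := by
  have hsq : ∀ q, ‖heavyState lam S q‖ ^ 2
      = if q.1 = q.2 ∧ q.1 ∈ S then lam q.1 / ∑ i ∈ S, lam i else 0 := by
    intro q
    unfold heavyState
    split_ifs
    · rw [Complex.norm_real, Real.norm_of_nonneg (Real.sqrt_nonneg _),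
        Real.sq_sqrt (div_nonneg (hnn _) hS.le)]
    · simp
  rw [enorm2, Fintype.sum_congr _ _ hsq, Fintype.sum_prod_type]
  simp only [ite_and, Finset.sum_ite_eq, Finset.mem_univ, if_true]
  rw [← Finset.sum_filter, Finset.filter_mem_eq_inter, Finset.univ_inter, ← Finset.sum_div,
    div_self hS.ne', Real.sqrt_one]

theorem sum_sqrt_mul_heavyState (hnn : ∀ i, 0 ≤ lam i) (S : Finset (Fin d)) :
    ∑ i, ((√(lam i) : ℝ) : ℂ) * heavyState lam S (i, i) = ((√(∑ i ∈ S, lam i) : ℝ) : ℂ) := by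
  have hterm : ∀ i, ((√(lam i) : ℝ) : ℂ) * heavyState lam S (i, i)
      = ((if i ∈ S then lam i / √(∑ i ∈ S, lam i) else 0 : ℝ) : ℂ) := by
    intro i
    unfold heavyState
    split_ifs with h1 h2 h2
    · rw [← Complex.ofReal_mul, Real.sqrt_div (hnn i), ← mul_div_assoc,
        Real.mul_self_sqrt (hnn i)]
    · exact absurd h1.2 h2
    · exact absurd ⟨rfl, h2⟩ h1
    · simp
  rw [Fintype.sum_congr _ _ hterm, ← Complex.ofReal_sum, ← Finset.sum_filter,
    Finset.filter_mem_eq_inter, Finset.univ_inter, ← Finset.sum_div, Real.div_sqrt]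

theorem rank_phiTensor_heavyState_le (p : ℕ) (S : Finset (Fin d)) :
    (Matrix.of fun a b => phiTensor p (heavyState lam S) (a, b)).rank ≤ p * #S := by
  classical
  have hdiag : (Matrix.of fun a b => phiTensor p (heavyState lam S) (a, b))
      = diagonal fun q : Fin p × Fin d => (((√p)⁻¹ : ℝ) : ℂ) * heavyState lam S (q.2, q.2) := by
    ext ⟨a, i⟩ ⟨a', j⟩
    by_cases ha : a = a' <;> by_cases hi : i = j <;> simp [phiTensor, heavyState, ha, hi]
  rw [hdiag, rank_diagonal, Fintype.card_subtype]
  calc _ ≤ #((univ : Finset (Fin p)) ×ˢ S) := Finset.card_le_card fun q hq => by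
        simp only [mem_filter, mem_univ, true_and, ne_eq, mul_eq_zero, not_or] at hq
        simp only [mem_product, mem_univ, true_and]
        by_contra h
        exact hq.2 (by simp [heavyState, h])
    _ = p * #S := by simp

end

theorem ofReal_mul_phiTensor_schmidtState (p : ℕ) {d : ℕ} (lam : Fin d → ℝ) (r : ℝ)
    (x : (Fin p × Fin d) × (Fin p × Fin d)) :
    (r : ℂ) * phiTensor p (schmidtState lam) x
      = diagonal (fun q : Fin p × Fin d => ((r / √p * √(lam q.2) : ℝ) : ℂ)) x.1 x.2 := by
  obtain ⟨⟨a, i⟩, ⟨a', j⟩⟩ := x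
  by_cases ha : a = a' <;> by_cases hi : i = j <;>
    simp [phiTensor, schmidtState, diagonal, ha, hi, div_eq_mul_inv, mul_assoc]

theorem card_filter_val_add_one_lt_le (d b : ℕ) :
    #(univ.filter fun i : Fin d => (i : ℕ) + 1 < b) ≤ b - 1 := by
  have h : univ.filter (fun i : Fin d => (i : ℕ) + 1 < b)
      = univ.filter (fun i : Fin d => (i : ℕ) < b - 1) := by
    ext i; simp only [mem_filter, mem_univ, true_and]; omega
  rw [h, Fin.card_filter_val_lt]
  exact min_le_right _ _

theorem sq_one_sub_two_mul_div_le {r Δ T : ℝ} (hr : 0 < r) (hΔ0 : 0 ≤ Δ) (hΔ : 5 * Δ ≤ 4 * r)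
    (h : r ^ 2 * (1 - T) ≤ Δ ^ 2) : (1 - 2 * Δ / r) ^ 2 ≤ T := by
  rw [one_sub_div hr.ne', div_pow, div_le_iff₀ (by positivity)]
  nlinarith [mul_nonneg hΔ0 (sub_nonneg.2 hΔ)]

theorem stmt_8_general {d p : ℕ} (hp : 0 < p)
    (lam : Fin d → ℝ) (hanti : Antitone lam) (hnn : ∀ i, 0 ≤ lam i)
    (hsum : ∑ i, lam i = 1)
    (ε : ℝ) (hε0 : 0 < ε)
    (b D : ℕ) (hb : ε ≤ ∑ i ∈ Finset.univ.filter (fun i : Fin d => (i : ℕ) + 1 < b), lam i)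
    (K : Matrix ((Fin p × Fin d) × (Fin p × Fin d)) ((Fin p × Fin d) × (Fin p × Fin d)) ℂ)
    (Δ : ℝ)
    -- `K (Φ_p ⊗ v)` is `Δ`-close to `Φ_p ⊗ Ω ⟨Ω|v⟩` for every unit vector `v`
    (hK : ∀ v : Fin d × Fin d → ℂ, enorm2 v = 1 →
      enorm2 (fun x : (Fin p × Fin d) × (Fin p × Fin d) =>
          K.mulVec (fun y => (if y.1.1 = y.2.1 then (((Real.sqrt p)⁻¹ : ℝ) : ℂ) else 0)
              * v (y.1.2, y.2.2)) x
            - (∑ i, ((Real.sqrt (lam i) : ℝ) : ℂ) * v (i, i)) *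
                ((if x.1.1 = x.2.1 then (((Real.sqrt p)⁻¹ : ℝ) : ℂ) else 0) *
                  (if x.1.2 = x.2.2 then ((Real.sqrt (lam x.1.2) : ℝ) : ℂ) else 0)))
        ≤ Δ)
    -- `K` multiplies Schmidt ranks (across the cut including the EPR registers) by ≤ `D`
    (hrank : ∀ v : ((Fin p × Fin d) × (Fin p × Fin d)) → ℂ,
      (Matrix.of fun a b' => K.mulVec v (a, b')).rank
        ≤ D * (Matrix.of fun a b' => v (a, b')).rank)
    (hΔ : Δ < Real.sqrt
      (∑ i ∈ Finset.univ.filter (fun i : Fin d => (i : ℕ) + 1 < b), lam i) / 4) :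
    (1 - 2 * Δ / Real.sqrt
        (∑ i ∈ Finset.univ.filter (fun i : Fin d => (i : ℕ) + 1 < b), lam i)) ^ 2
      ≤ ∑ i ∈ Finset.univ.filter (fun i : Fin d => (i : ℕ) < (b - 1) * D), lam i := by
  set S := univ.filter fun i : Fin d => (i : ℕ) + 1 < b
  set E := ∑ i ∈ S, lam i
  have hE : 0 < E := hε0.trans_le hb
  set w := heavyState lam S
  set X : Matrix (Fin p × Fin d) (Fin p × Fin d) ℂ :=
    Matrix.of fun a b' => K.mulVec (phiTensor p w) (a, b')
  set μ : Fin p × Fin d → ℝ := fun q => √E / √p * √(lam q.2)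
  have hclose : enorm2 (fun x => K.mulVec (phiTensor p w) x
      - (√E : ℂ) * phiTensor p (schmidtState lam) x) ≤ Δ := by
    have h := hK w (enorm2_heavyState hnn hE)
    rwa [sum_sqrt_mul_heavyState hnn] at h
  obtain ⟨hΔ0, hfrob⟩ := Real.sqrt_le_iff.1 hclose
  replace hfrob : ∑ i, ∑ j, ‖(X - diagonal fun q => (μ q : ℂ)) i j‖ ^ 2 ≤ Δ ^ 2 := by
    rw [Fintype.sum_prod_type] at hfrob
    simp only [ofReal_mul_phiTensor_schmidtState] at hfrob
    exact hfrob
  have hrk : X.rank ≤ Fintype.card (Fin p) * ((b - 1) * D) := by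
    calc X.rank ≤ D * (p * #S) :=
          (hrank _).trans (Nat.mul_le_mul_left D (rank_phiTensor_heavyState_le p S))
      _ ≤ D * (p * (b - 1)) := by gcongr; exact card_filter_val_add_one_lt_le d b
      _ = _ := by rw [Fintype.card_fin]; ring
  have hEY := card_mul_sq_mul_tail_le_frobenius hanti hnn (√E / √p) X hrk
  rw [hsum, Fintype.card_fin, div_pow, Real.sq_sqrt hE.le, Real.sq_sqrt (Nat.cast_nonneg p),
    mul_div_cancel₀ _ (by positivity)] at hEY
  exact sq_one_sub_two_mul_div_le (Real.sqrt_pos.2 hE) hΔ0 (by linarith)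
    (by rw [Real.sq_sqrt hE.le]; exact hEY.trans hfrob)

/-- AGSP implies spread bound, heavy part: `Ω` has Schmidt coefficients
`lam` (descending, written in its Schmidt basis so its coefficient matrix is
`diag(√lam)`), `ε ∈ (0,1)`, `b ≥ 2` is the least integer with `ε' = ∑_{i<b} lam i ≥ ε`.
If `K` is an EPR-assisted AGSP with error `Δ` and Schmidt-rank amplification factor `D`,
and `Δ < √ε'/4`, then the sum of the largest `(b−1)D` Schmidt coefficients is at least
`(1 − 2Δ/√ε')²`. (Indices `i` below are 1-based via `i.val + 1`.) -/
theorem stmt_8 {d p : ℕ} (hd : 0 < d) (hp : 0 < p)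
    (lam : Fin d → ℝ) (hanti : Antitone lam) (hnn : ∀ i, 0 ≤ lam i)
    (hsum : ∑ i, lam i = 1)
    (ε : ℝ) (hε0 : 0 < ε) (hε1 : ε < 1)
    (b D : ℕ) (hb2 : 2 ≤ b) (hbd : b ≤ d + 1)
    (hbmin : ∀ b'' : ℕ, b'' < b →
      ∑ i ∈ Finset.univ.filter (fun i : Fin d => (i : ℕ) + 1 < b''), lam i < ε)
    (hb : ε ≤ ∑ i ∈ Finset.univ.filter (fun i : Fin d => (i : ℕ) + 1 < b), lam i)
    (K : Matrix ((Fin p × Fin d) × (Fin p × Fin d)) ((Fin p × Fin d) × (Fin p × Fin d)) ℂ)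
    (Δ : ℝ)
    -- `K (Φ_p ⊗ v)` is `Δ`-close to `Φ_p ⊗ Ω ⟨Ω|v⟩` for every unit vector `v`
    (hK : ∀ v : Fin d × Fin d → ℂ, enorm2 v = 1 →
      enorm2 (fun x : (Fin p × Fin d) × (Fin p × Fin d) =>
          K.mulVec (fun y => (if y.1.1 = y.2.1 then (((Real.sqrt p)⁻¹ : ℝ) : ℂ) else 0)
              * v (y.1.2, y.2.2)) x
            - (∑ i, ((Real.sqrt (lam i) : ℝ) : ℂ) * v (i, i)) *
                ((if x.1.1 = x.2.1 then (((Real.sqrt p)⁻¹ : ℝ) : ℂ) else 0) *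
                  (if x.1.2 = x.2.2 then ((Real.sqrt (lam x.1.2) : ℝ) : ℂ) else 0)))
        ≤ Δ)
    -- `K` multiplies Schmidt ranks (across the cut including the EPR registers) by ≤ `D`
    (hrank : ∀ v : ((Fin p × Fin d) × (Fin p × Fin d)) → ℂ,
      (Matrix.of fun a b' => K.mulVec v (a, b')).rank
        ≤ D * (Matrix.of fun a b' => v (a, b')).rank)
    (hΔ : Δ < Real.sqrt
      (∑ i ∈ Finset.univ.filter (fun i : Fin d => (i : ℕ) + 1 < b), lam i) / 4) :
    (1 - 2 * Δ / Real.sqrt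
        (∑ i ∈ Finset.univ.filter (fun i : Fin d => (i : ℕ) + 1 < b), lam i)) ^ 2
      ≤ ∑ i ∈ Finset.univ.filter (fun i : Fin d => (i : ℕ) < (b - 1) * D), lam i :=
  stmt_8_general hp lam hanti hnn hsum ε hε0 b D hb K Δ hK hrank hΔ
end

section
/- (Compression of an AGSP's coefficients, normalization step) Let α_i = w_i/N with w_i, N positive integers, M = ∑_i w_i, and let K = ∑_i α_i U_i ⊗ V_i with ‖U_i‖, ‖V_i‖ ≤ 1. Define |Φ⟩ = (1/√M)∑_i ∑_{j=1}^{w_i} |i,j⟩_a|i,j⟩_b, SEL_A = ∑_{i,j} |i,j⟩⟨i,j|_a ⊗ U_i, SEL_B = ∑_{i,j}|i,j⟩⟨i,j|_b ⊗ V_i. Then K ⊗ |Φ⟩⟨Φ| = (M/N) · ( (I⊗I⊗|Φ⟩⟨Φ|) (SEL_A ⊗ SEL_B) (I⊗I⊗|Φ⟩⟨Φ|) ), with the registers ordered so that SEL_A acts on (a, A) and SEL_B acts on (b, B). -/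
/-- The Euclidean (ℓ²) norm of a finitely-supported complex vector. -/
noncomputable def enorm' {ι : Type*} [Fintype ι] (v : ι → ℂ) : ℝ :=
  Real.sqrt (∑ i, ‖v i‖ ^ 2)

/-!
Compressing by `I ⊗ |Φ⟩⟨Φ|` turns any `X` into `⟨Φ|X|Φ⟩ ⊗ |Φ⟩⟨Φ|`, where `⟨Φ|X|Φ⟩` is the partial
expectation over the ancilla registers. `SEL_A ⊗ SEL_B` is block diagonal in the register
index `(x, y)` with blocks `U_x ⊗ V_y`, and `|Φ_{(x,y)}|² = 1/M` exactly on the diagonal `x = y`,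
so `⟨Φ|SEL_A ⊗ SEL_B|Φ⟩ = (1/M) ∑_{(i,j)} U_i ⊗ V_i = (1/M) ∑_i w_i U_i ⊗ V_i = (N/M) K`.
-/

open Matrix
open scoped Kronecker

namespace Matrix

variable {R l n κ : Type*} [CommSemiring R] [Fintype κ]

/-- `⟨ψ|X|φ⟩`, contracting only the second tensor factor. -/
def partialSandwich (ψ : κ → R) (X : Matrix (l × κ) (n × κ) R) (φ : κ → R) : Matrix l n R :=
  of fun a b => ∑ x, ∑ y, ψ x * X (a, x) (b, y) * φ y

theorem one_kronecker_vecMulVec_mul_mul [Fintype l] [Fintype n] [DecidableEq l] [DecidableEq n]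
    (φ ψ : κ → R) (X : Matrix (l × κ) (n × κ) R) :
    ((1 : Matrix l l R) ⊗ₖ vecMulVec φ ψ) * X * ((1 : Matrix n n R) ⊗ₖ vecMulVec φ ψ) =
      partialSandwich ψ X φ ⊗ₖ vecMulVec φ ψ := by
  ext ⟨a, x⟩ ⟨b, y⟩
  simp [mul_apply, vecMulVec_apply, one_apply, Fintype.sum_prod_type,
    partialSandwich, Finset.sum_mul]
  rw [Finset.sum_comm]
  exact Finset.sum_congr rfl fun _ _ => Finset.sum_congr rfl fun _ _ => by ring

theorem partialSandwich_blockDiagonal [DecidableEq κ] (ψ φ : κ → R) (D : κ → Matrix l n R) :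
    partialSandwich ψ (blockDiagonal D) φ = ∑ x, (ψ x * φ x) • D x := by
  ext a b
  simp [partialSandwich, blockDiagonal_apply, Matrix.sum_apply, mul_comm, mul_left_comm]

end Matrix

theorem Fintype.sum_sigma_fin_fst {ι M : Type*} [Fintype ι] [AddCommMonoid M] (w : ι → ℕ)
    (f : ι → M) : ∑ j : Σ i, Fin (w i), f j.1 = ∑ i, w i • f i := by
  simp [Fintype.sum_sigma]

theorem stmt_17_general {m dA dB N : ℕ} (w : Fin m → ℕ)
    (U : Fin m → Matrix (Fin dA) (Fin dA) ℂ) (V : Fin m → Matrix (Fin dB) (Fin dB) ℂ) :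
    let J := Σ i : Fin m, Fin (w i)
    let Mtot : ℕ := ∑ i, w i
    let Φ : J × J → ℂ := fun x => if x.1 = x.2 then (((Real.sqrt Mtot)⁻¹ : ℝ) : ℂ) else 0
    -- `I_{AB} ⊗ |Φ⟩⟨Φ|`
    let P : Matrix ((Fin dA × Fin dB) × (J × J)) ((Fin dA × Fin dB) × (J × J)) ℂ :=
      Matrix.of fun r c => (if r.1 = c.1 then 1 else 0) * (Φ r.2 * (starRingEnd ℂ) (Φ c.2))
    -- `SEL_A ⊗ SEL_B`
    let SEL : Matrix ((Fin dA × Fin dB) × (J × J)) ((Fin dA × Fin dB) × (J × J)) ℂ :=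
      Matrix.of fun r c => if r.2.1 = c.2.1 ∧ r.2.2 = c.2.2 then
        U r.2.1.1 r.1.1 c.1.1 * V r.2.2.1 r.1.2 c.1.2 else 0
    -- `K ⊗ |Φ⟩⟨Φ|` with `K = ∑_i (w_i/N) U_i ⊗ V_i`
    let KΦ : Matrix ((Fin dA × Fin dB) × (J × J)) ((Fin dA × Fin dB) × (J × J)) ℂ :=
      Matrix.of fun r c =>
        (∑ i, ((w i : ℂ) / (N : ℂ)) * U i r.1.1 c.1.1 * V i r.1.2 c.1.2)
          * (Φ r.2 * (starRingEnd ℂ) (Φ c.2))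
    KΦ = ((Mtot : ℂ) / (N : ℂ)) • (P * SEL * P) := by
  intro J Mtot Φ P SEL KΦ
  rcases isEmpty_or_nonempty J with hJ | hJ
  · exact Subsingleton.elim _ _
  have hM : (Mtot : ℂ) ≠ 0 :=
    Nat.cast_ne_zero.mpr (by simpa [Mtot, J] using Fintype.card_ne_zero (α := J))
  have hΦ : ∀ x, star Φ x * Φ x = if x.1 = x.2 then (Mtot : ℂ)⁻¹ else 0 := fun x => by
    by_cases hx : x.1 = x.2 <;> simp [Φ, hx, Complex.conj_ofReal,
      ← Complex.ofReal_mul, ← mul_inv, Real.mul_self_sqrt (Nat.cast_nonneg' Mtot)]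
  have hP : P = 1 ⊗ₖ vecMulVec Φ (star Φ) := by
    ext r c
    simp [P, vecMulVec_apply, one_apply]
  have hSEL : SEL = blockDiagonal fun x : J × J => U x.1.1 ⊗ₖ V x.2.1 := by
    ext r c
    simp [SEL, blockDiagonal_apply, Prod.ext_iff]
  have hKΦ : KΦ = (∑ i, ((w i : ℂ) / N) • (U i ⊗ₖ V i)) ⊗ₖ vecMulVec Φ (star Φ) := by
    ext r c
    simp [KΦ, vecMulVec_apply, Matrix.sum_apply, mul_assoc]
  rw [hKΦ, hP, hSEL, one_kronecker_vecMulVec_mul_mul, partialSandwich_blockDiagonal,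
    ← smul_kronecker]
  congr 1
  simp only [hΦ, ite_smul, zero_smul, Fintype.sum_prod_type, Finset.sum_ite_eq, Finset.mem_univ,
    if_true]
  rw [Fintype.sum_sigma_fin_fst w fun i => (Mtot : ℂ)⁻¹ • (U i ⊗ₖ V i), Finset.smul_sum]
  refine Finset.sum_congr rfl fun i _ => ?_
  rw [← Nat.cast_smul_eq_nsmul ℂ, smul_smul, smul_smul]
  congr 1
  field_simp

/-- Compression of an AGSP's coefficients, normalization step: with
`α_i = w_i/N`, `M = ∑ w_i`, `K = ∑ α_i U_i ⊗ V_i` (contractions `U_i, V_i`),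
`|Φ⟩ = (1/√M) ∑_{i,j} |i,j⟩_a|i,j⟩_b` and the controlled-unitary operators
`SEL_A ⊗ SEL_B`, one has
`K ⊗ |Φ⟩⟨Φ| = (M/N) · (I ⊗ |Φ⟩⟨Φ|)(SEL_A ⊗ SEL_B)(I ⊗ |Φ⟩⟨Φ|)`. -/
theorem stmt_17 {m dA dB N : ℕ} (hN : 0 < N) (w : Fin m → ℕ) (hw : ∀ i, 0 < w i)
    (U : Fin m → Matrix (Fin dA) (Fin dA) ℂ) (V : Fin m → Matrix (Fin dB) (Fin dB) ℂ)
    (hU : ∀ (i) (v : Fin dA → ℂ), enorm' ((U i).mulVec v) ≤ enorm' v)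
    (hV : ∀ (i) (v : Fin dB → ℂ), enorm' ((V i).mulVec v) ≤ enorm' v) :
    let J := Σ i : Fin m, Fin (w i)
    let Mtot : ℕ := ∑ i, w i
    let Φ : J × J → ℂ := fun x => if x.1 = x.2 then (((Real.sqrt Mtot)⁻¹ : ℝ) : ℂ) else 0
    -- `I_{AB} ⊗ |Φ⟩⟨Φ|`
    let P : Matrix ((Fin dA × Fin dB) × (J × J)) ((Fin dA × Fin dB) × (J × J)) ℂ :=
      Matrix.of fun r c => (if r.1 = c.1 then 1 else 0) * (Φ r.2 * (starRingEnd ℂ) (Φ c.2))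
    -- `SEL_A ⊗ SEL_B`
    let SEL : Matrix ((Fin dA × Fin dB) × (J × J)) ((Fin dA × Fin dB) × (J × J)) ℂ :=
      Matrix.of fun r c => if r.2.1 = c.2.1 ∧ r.2.2 = c.2.2 then
        U r.2.1.1 r.1.1 c.1.1 * V r.2.2.1 r.1.2 c.1.2 else 0
    -- `K ⊗ |Φ⟩⟨Φ|` with `K = ∑_i (w_i/N) U_i ⊗ V_i`
    let KΦ : Matrix ((Fin dA × Fin dB) × (J × J)) ((Fin dA × Fin dB) × (J × J)) ℂ :=
      Matrix.of fun r c =>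
        (∑ i, ((w i : ℂ) / (N : ℂ)) * U i r.1.1 c.1.1 * V i r.1.2 c.1.2)
          * (Φ r.2 * (starRingEnd ℂ) (Φ c.2))
    KΦ = ((Mtot : ℂ) / (N : ℂ)) • (P * SEL * P) :=
  stmt_17_general w U V
end

section
/- (Exact communication lower bound via spread) Let |ψ⟩ be a unit vector in ℂ^{d_A} ⊗ ℂ^{d_B} with Schmidt rank r and largest Schmidt coefficient λ_1. Suppose |ψ'⟩ is obtained from |ψ⟩ by transferring one qubit across the cut, i.e., |ψ'⟩ is the same vector viewed under a repartition in which a 2-dimensional tensor factor moves from the A side to the B side (or vice versa). Then the Schmidt rank r' and largest Schmidt coefficient λ_1' of |ψ'⟩ satisfy r/2 ≤ r' ≤ 2r and λ_1/2 ≤ λ_1' ≤ 2λ_1; consequently log(r'λ_1') ≤ log(rλ_1) + 2. -/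
/-!
Split `ψ` into its two row blocks `B₀ B₁ : Matrix (Fin a) (Fin b) ℂ`; then `ψ` is `B₀` stacked on
`B₁` and `ψ'` is `B₀` next to `B₁`, so that `ψᴴ ψ = ∑ₛ Bₛᴴ Bₛ` and `ψ' ψ'ᴴ = ∑ₛ Bₛ Bₛᴴ`, while every
`Bₛ` is a submatrix of both `ψ` and `ψ'`. Since `rank (Aᴴ A) = rank A`, rank subadditivity gives
`rank ψ ≤ ∑ₛ rank Bₛ ≤ 2 rank ψ'`. The largest eigenvalue of `ψ ψᴴ` is `‖ψ‖²` for the `L²` operator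
norm, and the C⋆-identity turns the same two Gram decompositions into `‖ψ‖² ≤ ∑ₛ ‖Bₛ‖² ≤ 2 ‖ψ'‖²`,
where `‖Bₛ‖² ≤ ‖ψ'‖²` because `0 ≤ Bₛ Bₛᴴ ≤ ψ' ψ'ᴴ` in the Loewner order. The bound on the
logarithm follows from `r' λ₁' ≤ 4 r λ₁`.
-/

open Matrix
open scoped Matrix.Norms.L2Operator MatrixOrder ComplexOrder

theorem CStarAlgebra.norm_le_norm_sum_of_nonneg {ι A : Type*} [NonUnitalCStarAlgebra A]
    [PartialOrder A] [StarOrderedRing A] {s : Finset ι} {f : ι → A} (hf : ∀ i ∈ s, 0 ≤ f i) {i : ι}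
    (hi : i ∈ s) : ‖f i‖ ≤ ‖∑ j ∈ s, f j‖ :=
  norm_le_norm_of_nonneg_of_le (hf i hi) (Finset.single_le_sum hf hi)

theorem Real.logb_two_le_logb_two_add_two {x y : ℝ} (hx : 0 < x) (hxy : x ≤ 2 ^ 2 * y) :
    Real.logb 2 x ≤ Real.logb 2 y + 2 := by
  have hy : 0 < y := by nlinarith
  calc Real.logb 2 x ≤ Real.logb 2 (2 ^ 2 * y) := Real.logb_le_logb_of_le (by norm_num) hx hxy
    _ = Real.logb 2 y + 2 := by
      rw [Real.logb_mul (by norm_num) hy.ne', Real.logb_pow, Real.logb_self_eq_one (by norm_num)]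
      push_cast
      ring

namespace Matrix

variable {k m n R : Type*}

theorem rank_eq_zero_iff [Fintype n] [Field R] {A : Matrix m n R} : A.rank = 0 ↔ A = 0 := by
  classical
  rw [rank, Submodule.finrank_eq_zero, LinearMap.range_eq_bot, ← toLin'_apply',
    map_eq_zero_iff _ toLin'.injective]

theorem rank_sum_le [Fintype m] [Fintype n] [Field R] {ι : Type*} (s : Finset ι)
    (A : ι → Matrix m n R) : (∑ i ∈ s, A i).rank ≤ ∑ i ∈ s, (A i).rank := by
  classical
  have hrank (A : Matrix m n R) : (A.rank : Cardinal) = (toLin' A).rank := by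
    rw [rank, toLin'_apply', Module.finrank_eq_rank]
  have := LinearMap.rank_finsetSum_le s fun i => toLin' (A i)
  simp only [← map_sum, ← hrank] at this
  exact_mod_cast this

theorem l2_opNorm_self_mul_conjTranspose [Fintype m] [Fintype n] [DecidableEq m] [DecidableEq n]
    (A : Matrix m n ℂ) : ‖A * Aᴴ‖ = ‖A‖ * ‖A‖ := by
  simpa [l2_opNorm_conjTranspose] using l2_opNorm_conjTranspose_mul_self Aᴴ

theorem iSup_eigenvalues_self_mul_conjTranspose [Fintype m] [Fintype n] [DecidableEq m]
    [DecidableEq n] (M : Matrix m n ℂ) :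
    ⨆ i, (isHermitian_mul_conjTranspose_self M).eigenvalues i = ‖M‖ ^ 2 := by
  rcases isEmpty_or_nonempty m with hm | hm
  · simp [Subsingleton.elim M 0]
  set hA := isHermitian_mul_conjTranspose_self M
  have hspec := hA.spectrum_real_eq_range_eigenvalues
  rw [sq, ← l2_opNorm_self_mul_conjTranspose]
  obtain ⟨i, hi⟩ : ‖M * Mᴴ‖ ∈ Set.range hA.eigenvalues :=
    hspec ▸ CStarAlgebra.norm_mem_spectrum_of_nonneg (posSemidef_self_mul_conjTranspose M).nonneg
  refine le_antisymm (ciSup_le fun j => ?_) (hi ▸ le_ciSup (Set.finite_range _).bddAbove i)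
  exact (Real.le_norm_self _).trans (spectrum.norm_le_norm_of_mem (hspec ▸ Set.mem_range_self j))

def stackRows (B : k → Matrix m n R) : Matrix (k × m) n R := of fun p j => B p.1 p.2 j

def stackCols (B : k → Matrix m n R) : Matrix m (k × n) R := of fun i q => B q.1 i q.2

section Gram

variable [Fintype k] [Semiring R] [StarRing R] (B : k → Matrix m n R)

theorem conjTranspose_stackRows_mul_self [Fintype m] :
    (stackRows B)ᴴ * stackRows B = ∑ s, (B s)ᴴ * B s := by
  ext i j
  simp [stackRows, mul_apply, sum_apply, Fintype.sum_prod_type]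

theorem stackCols_mul_conjTranspose_self [Fintype n] :
    stackCols B * (stackCols B)ᴴ = ∑ s, B s * (B s)ᴴ := by
  ext i j
  simp [stackCols, mul_apply, sum_apply, Fintype.sum_prod_type]

end Gram

section Rank

variable [Fintype k] [Fintype m] [Fintype n] [Field R] [PartialOrder R] [StarRing R]
  [StarOrderedRing R] (B : k → Matrix m n R)

theorem rank_stackRows_le_card_mul :
    (stackRows B).rank ≤ Fintype.card k * (stackCols B).rank := by
  calc (stackRows B).rank = (∑ s, (B s)ᴴ * B s).rank := by
        rw [← conjTranspose_stackRows_mul_self, rank_conjTranspose_mul_self]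
    _ ≤ ∑ s, (B s).rank := (rank_sum_le _ _).trans_eq (by simp only [rank_conjTranspose_mul_self])
    _ ≤ ∑ _s : k, (stackCols B).rank :=
        Finset.sum_le_sum fun s _ => rank_submatrix_le (stackCols B) id (Prod.mk s)
    _ = Fintype.card k * (stackCols B).rank := by simp

theorem rank_stackCols_le_card_mul :
    (stackCols B).rank ≤ Fintype.card k * (stackRows B).rank := by
  calc (stackCols B).rank = (∑ s, B s * (B s)ᴴ).rank := by
        rw [← stackCols_mul_conjTranspose_self, rank_self_mul_conjTranspose]
    _ ≤ ∑ s, (B s).rank := (rank_sum_le _ _).trans_eq (by simp only [rank_self_mul_conjTranspose])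
    _ ≤ ∑ _s : k, (stackRows B).rank :=
        Finset.sum_le_sum fun s _ => rank_submatrix_le (stackRows B) (Prod.mk s) id
    _ = Fintype.card k * (stackRows B).rank := by simp

end Rank

section Norm

variable [Fintype k] [Fintype m] [Fintype n] [DecidableEq n] (B : k → Matrix m n ℂ)

theorem sq_l2_opNorm_le_sq_l2_opNorm_stackRows (s : k) : ‖B s‖ ^ 2 ≤ ‖stackRows B‖ ^ 2 := by
  simp only [sq, ← l2_opNorm_conjTranspose_mul_self, conjTranspose_stackRows_mul_self]
  exact CStarAlgebra.norm_le_norm_sum_of_nonneg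
    (fun t _ => (posSemidef_conjTranspose_mul_self (B t)).nonneg) (Finset.mem_univ s)

theorem sq_l2_opNorm_stackRows_le_sum : ‖stackRows B‖ ^ 2 ≤ ∑ s, ‖B s‖ ^ 2 := by
  simpa only [sq, ← l2_opNorm_conjTranspose_mul_self, conjTranspose_stackRows_mul_self]
    using norm_sum_le _ fun s => (B s)ᴴ * B s

variable [DecidableEq k] [DecidableEq m]

theorem sq_l2_opNorm_le_sq_l2_opNorm_stackCols (s : k) : ‖B s‖ ^ 2 ≤ ‖stackCols B‖ ^ 2 := by
  simp only [sq, ← l2_opNorm_self_mul_conjTranspose, stackCols_mul_conjTranspose_self]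
  exact CStarAlgebra.norm_le_norm_sum_of_nonneg
    (fun t _ => (posSemidef_self_mul_conjTranspose (B t)).nonneg) (Finset.mem_univ s)

theorem sq_l2_opNorm_stackCols_le_sum : ‖stackCols B‖ ^ 2 ≤ ∑ s, ‖B s‖ ^ 2 := by
  simpa only [sq, ← l2_opNorm_self_mul_conjTranspose, stackCols_mul_conjTranspose_self]
    using norm_sum_le _ fun s => B s * (B s)ᴴ

theorem sq_l2_opNorm_stackRows_le_card_mul :
    ‖stackRows B‖ ^ 2 ≤ Fintype.card k * ‖stackCols B‖ ^ 2 := by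
  simpa using (sq_l2_opNorm_stackRows_le_sum B).trans
    (Finset.sum_le_sum fun s _ => sq_l2_opNorm_le_sq_l2_opNorm_stackCols B s)

theorem sq_l2_opNorm_stackCols_le_card_mul :
    ‖stackCols B‖ ^ 2 ≤ Fintype.card k * ‖stackRows B‖ ^ 2 := by
  simpa using (sq_l2_opNorm_stackCols_le_sum B).trans
    (Finset.sum_le_sum fun s _ => sq_l2_opNorm_le_sq_l2_opNorm_stackRows B s)

end Norm

end Matrix

theorem stmt_19_general {a b : ℕ}
    (ψ : Matrix (Fin 2 × Fin a) (Fin b) ℂ)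
    (hψ : ∑ i, ∑ j, ‖ψ i j‖ ^ 2 = 1) :
    let ψ' : Matrix (Fin a) (Fin 2 × Fin b) ℂ := Matrix.of fun i sj => ψ (sj.1, i) sj.2
    let lam1 : ℝ := ⨆ i, (Matrix.isHermitian_mul_conjTranspose_self ψ).eigenvalues i
    let lam1' : ℝ := ⨆ i, (Matrix.isHermitian_mul_conjTranspose_self ψ').eigenvalues i
    ψ.rank ≤ 2 * ψ'.rank ∧ ψ'.rank ≤ 2 * ψ.rank ∧
      lam1 ≤ 2 * lam1' ∧ lam1' ≤ 2 * lam1 ∧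
      Real.logb 2 ((ψ'.rank : ℝ) * lam1') ≤ Real.logb 2 ((ψ.rank : ℝ) * lam1) + 2 := by
  intro ψ' lam1 lam1'
  let B : Fin 2 → Matrix (Fin a) (Fin b) ℂ := fun s => ψ.submatrix (Prod.mk s) id
  have hψ_eq : ψ = stackRows B := rfl
  have hψ'_eq : ψ' = stackCols B := rfl
  have hlam1 : lam1 = ‖ψ‖ ^ 2 := iSup_eigenvalues_self_mul_conjTranspose ψ
  have hlam1' : lam1' = ‖ψ'‖ ^ 2 := iSup_eigenvalues_self_mul_conjTranspose ψ'
  have hr : ψ.rank ≤ 2 * ψ'.rank := by simpa [← hψ_eq, ← hψ'_eq] using rank_stackRows_le_card_mul B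
  have hr' : ψ'.rank ≤ 2 * ψ.rank := by simpa [← hψ_eq, ← hψ'_eq] using rank_stackCols_le_card_mul B
  have hl : lam1 ≤ 2 * lam1' := by
    simpa [hlam1, hlam1', ← hψ_eq, ← hψ'_eq] using sq_l2_opNorm_stackRows_le_card_mul B
  have hl' : lam1' ≤ 2 * lam1 := by
    simpa [hlam1, hlam1', ← hψ_eq, ← hψ'_eq] using sq_l2_opNorm_stackCols_le_card_mul B
  have hψ0 : ψ ≠ 0 := by
    rintro rfl
    simp at hψ
  have hrank : 0 < ψ.rank := Nat.pos_of_ne_zero (mt rank_eq_zero_iff.1 hψ0)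
  have hlam1_pos : 0 < lam1 := hlam1 ▸ pow_pos (norm_pos_iff.2 hψ0) 2
  have hlam1'_pos : 0 < lam1' := by linarith
  have hpos : 0 < (ψ'.rank : ℝ) * lam1' :=
    mul_pos (by exact_mod_cast (by omega : 0 < ψ'.rank)) hlam1'_pos
  refine ⟨hr, hr', hl, hl', Real.logb_two_le_logb_two_add_two hpos ?_⟩
  calc (ψ'.rank : ℝ) * lam1' ≤ (2 * ψ.rank) * (2 * lam1) :=
        mul_le_mul (by exact_mod_cast hr') hl' hlam1'_pos.le (by positivity)
    _ = 2 ^ 2 * (ψ.rank * lam1) := by ring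

/-- Exact communication lower bound via spread: moving one qubit
(a dimension-2 tensor factor) across the cut — i.e. reshaping the coefficient matrix
`ψ : (ℂ²⊗ℂ^a) × ℂ^b` into `ψ' : ℂ^a × (ℂ²⊗ℂ^b)` — changes the Schmidt rank and the
largest Schmidt coefficient by at most a factor of 2 in each direction; consequently
`log₂(r'λ₁') ≤ log₂(rλ₁) + 2`. -/
theorem stmt_19 {a b : ℕ} (ha : 0 < a) (hb : 0 < b)
    (ψ : Matrix (Fin 2 × Fin a) (Fin b) ℂ)
    (hψ : ∑ i, ∑ j, ‖ψ i j‖ ^ 2 = 1) :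
    let ψ' : Matrix (Fin a) (Fin 2 × Fin b) ℂ := Matrix.of fun i sj => ψ (sj.1, i) sj.2
    let lam1 : ℝ := ⨆ i, (Matrix.isHermitian_mul_conjTranspose_self ψ).eigenvalues i
    let lam1' : ℝ := ⨆ i, (Matrix.isHermitian_mul_conjTranspose_self ψ').eigenvalues i
    ψ.rank ≤ 2 * ψ'.rank ∧ ψ'.rank ≤ 2 * ψ.rank ∧
      lam1 ≤ 2 * lam1' ∧ lam1' ≤ 2 * lam1 ∧
      Real.logb 2 ((ψ'.rank : ℝ) * lam1') ≤ Real.logb 2 ((ψ.rank : ℝ) * lam1) + 2 :=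
  stmt_19_general ψ hψ
end
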